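/- arXiv:1009.2163 — 6 statements merged into one kernel-verified Lean document; each statement's English description precedes it below -/
import Mathlib

section
/- Let ι : W_{D(2)} → W_D ⊗ W_D be the ℝ-algebra homomorphism determined by ι(u) = x ⊗ 1 and ι(v) = x ⊗ x (this is well defined since (x ⊗ 1)² = (x ⊗ 1)(x ⊗ x) = (x ⊗ x)² = 0 in W_D ⊗ W_D). Then ι is injective and its range is exactly the equalizer subalgebra {z ∈ W_D ⊗ W_D : p₁(z) = p₀(z)}; in other words, W_{D(2)} → W_D ⊗ W_D ⇉ W_D is an equalizer diagram of commutative ℝ-algebras. -/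
/-! `W_D` has basis `1, x`, so every element of `W_D ⊗ W_D` is uniquely `1 ⊗ m + x ⊗ m'`.
On such an element `p₁` is `m` and `p₀` is `ε(m) • 1`, so the equalizer is cut out by
`m ∈ ℝ • 1`: it is spanned by `1 ⊗ 1, x ⊗ 1, x ⊗ x`, the images of `1, u, v`. Since `W_{D(2)}` is
spanned by `1, u, v`, `ι` is a bijection onto the equalizer. -/

open TensorProduct Polynomial

noncomputable section

/-- The first projection `p₁ : A ⊗ B →ₐ[ℝ] B`, `a ⊗ b ↦ ε_A a • b`. -/
def p1 {A B : Type} [CommRing A] [CommRing B] [Algebra ℝ A] [Algebra ℝ B]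
    (εA : A →ₐ[ℝ] ℝ) : (A ⊗[ℝ] B) →ₐ[ℝ] B :=
  Algebra.TensorProduct.productMap ((Algebra.ofId ℝ B).comp εA) (AlgHom.id ℝ B)

/-- The second projection `p₀ : A ⊗ B →ₐ[ℝ] B`, `a ⊗ b ↦ (ε_A a * ε_B b) • 1`. -/
def p0 {A B : Type} [CommRing A] [CommRing B] [Algebra ℝ A] [Algebra ℝ B]
    (εA : A →ₐ[ℝ] ℝ) (εB : B →ₐ[ℝ] ℝ) : (A ⊗[ℝ] B) →ₐ[ℝ] B :=
  Algebra.TensorProduct.productMap ((Algebra.ofId ℝ B).comp εA) ((Algebra.ofId ℝ B).comp εB)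

/-- The Weil algebra `W_D = ℝ[X]/(X²)`. -/
def WD : Type := Polynomial ℝ ⧸ Ideal.span {(X : Polynomial ℝ) ^ 2}

instance : CommRing WD := Ideal.Quotient.commRing _
instance : Algebra ℝ WD := Ideal.Quotient.algebra _

/-- The class of `X` in `W_D`. -/
def xD : WD := Ideal.Quotient.mk _ (X : Polynomial ℝ)

/-- The augmentation `ε : W_D →ₐ[ℝ] ℝ`, `a + b·x ↦ a`. -/
def εD : WD →ₐ[ℝ] ℝ :=
  Ideal.Quotient.liftₐ _ (aeval (0 : ℝ)) (by
    intro a ha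
    rw [Ideal.mem_span_singleton] at ha
    obtain ⟨c, rfl⟩ := ha
    simp)

/-- The ideal `(U², UV, V²)` in `ℝ[U,V]`. -/
def ID2 : Ideal (MvPolynomial (Fin 2) ℝ) :=
  Ideal.span {MvPolynomial.X 0 * MvPolynomial.X 0, MvPolynomial.X 0 * MvPolynomial.X 1,
    MvPolynomial.X 1 * MvPolynomial.X 1}

/-- The Weil algebra `W_{D(2)} = ℝ[U,V]/(U², UV, V²)`. -/
def WD2 : Type := MvPolynomial (Fin 2) ℝ ⧸ ID2

instance : CommRing WD2 := Ideal.Quotient.commRing _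
instance : Algebra ℝ WD2 := Ideal.Quotient.algebra _

lemma xD_sq : xD * xD = 0 := by
  have h : (Ideal.Quotient.mk (Ideal.span {(X : Polynomial ℝ) ^ 2}))
      ((X : Polynomial ℝ) ^ 2) = 0 :=
    Ideal.Quotient.eq_zero_iff_mem.2 (Ideal.subset_span rfl)
  have h2 : (Ideal.Quotient.mk (Ideal.span {(X : Polynomial ℝ) ^ 2})) (X : Polynomial ℝ) *
      (Ideal.Quotient.mk (Ideal.span {(X : Polynomial ℝ) ^ 2})) (X : Polynomial ℝ) = 0 := by
    simpa [pow_two, map_mul] using h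
  exact h2

/-- The homomorphism `ι : W_{D(2)} → W_D ⊗ W_D` with `ι u = x ⊗ 1` and `ι v = x ⊗ x`. -/
def iota : WD2 →ₐ[ℝ] WD ⊗[ℝ] WD :=
  Ideal.Quotient.liftₐ ID2 (MvPolynomial.aeval ![xD ⊗ₜ[ℝ] 1, xD ⊗ₜ[ℝ] xD]) (by
    intro a ha
    have key : ID2 ≤
        RingHom.ker (MvPolynomial.aeval
          ![xD ⊗ₜ[ℝ] 1, xD ⊗ₜ[ℝ] xD] : MvPolynomial (Fin 2) ℝ →ₐ[ℝ] WD ⊗[ℝ] WD) := by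
      rw [ID2, Ideal.span_le]
      rintro p hp
      simp only [Set.mem_insert_iff, Set.mem_singleton_iff] at hp
      simp only [SetLike.mem_coe, RingHom.mem_ker]
      rcases hp with rfl | rfl | rfl <;>
        simp [map_mul, Algebra.TensorProduct.tmul_mul_tmul, xD_sq,
          Matrix.cons_val_zero, Matrix.cons_val_one] <;>
        exact (@Algebra.TensorProduct.tmul_mul_tmul ℝ WD WD _ _ Algebra.toModule _ _ _
          Algebra.toModule _ _ _ _ _ _).trans
          (by rw [xD_sq]; exact (TensorProduct.mk ℝ WD WD).map_zero₂ _)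
    exact key ha)

lemma εD_xD : εD xD = 0 := by
  show aeval (0 : ℝ) (X : ℝ[X]) = 0
  simp

def toDualNumber : WD →ₐ[ℝ] DualNumber ℝ :=
  Ideal.Quotient.liftₐ _ (aeval DualNumber.eps) fun p hp => by
    obtain ⟨q, rfl⟩ := Ideal.mem_span_singleton'.1 hp
    simp [pow_two]

lemma toDualNumber_xD : toDualNumber xD = DualNumber.eps := by
  show aeval DualNumber.eps (X : ℝ[X]) = _
  simp

lemma linearIndependent_one_xD : LinearIndependent ℝ ![(1 : WD), xD] := by
  refine LinearIndependent.pair_iffₛ.2 fun s t s' t' h => ?_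
  have h' := congrArg toDualNumber h
  simp only [map_add, map_smul, map_one, toDualNumber_xD] at h'
  exact ⟨by simpa using congrArg TrivSqZeroExt.fst h', by simpa using congrArg TrivSqZeroExt.snd h'⟩

lemma exists_eq_smul_one_add_smul_xD (z : WD) : ∃ a c : ℝ, z = a • 1 + c • xD := by
  -- the ascription keeps the image typed as `WD` rather than as the bare quotient ring
  obtain ⟨p, rfl⟩ : ∃ p, (Ideal.Quotient.mkₐ ℝ _ : ℝ[X] →ₐ[ℝ] WD) p = z :=
    Ideal.Quotient.mkₐ_surjective ℝ _ z
  induction p using Polynomial.induction_on' with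
  | add p q hp hq =>
    obtain ⟨a, c, hpac⟩ := hp
    obtain ⟨a', c', hqac⟩ := hq
    exact ⟨a + a', c + c', by rw [map_add, hpac, hqac, add_smul, add_smul]; abel⟩
  | monomial n r =>
    rw [← C_mul_X_pow_eq_monomial, ← smul_eq_C_mul, map_smul, map_pow]
    change ∃ a c : ℝ, r • xD ^ n = a • 1 + c • xD
    rcases n with _ | _ | n
    · exact ⟨r, 0, by simp⟩
    · exact ⟨0, r, by simp⟩
    · exact ⟨0, 0, by simp [pow_succ, mul_assoc, xD_sq]⟩

def basisWD : Module.Basis (Fin 2) ℝ WD :=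
  .mk linearIndependent_one_xD fun z _ => by
    obtain ⟨a, c, rfl⟩ := exists_eq_smul_one_add_smul_xD z
    rw [Matrix.range_cons_cons_empty]
    exact Submodule.mem_span_pair.2 ⟨a, c, rfl⟩

@[simp] lemma basisWD_zero : basisWD 0 = 1 := by simp [basisWD]
@[simp] lemma basisWD_one : basisWD 1 = xD := by simp [basisWD]

section TwoElementBasis

variable {R M N : Type*} [CommSemiring R] [AddCommMonoid M] [Module R M] [AddCommMonoid N]
  [Module R N] (b : Module.Basis (Fin 2) R M)

lemma Module.Basis.exists_eq_tmul_add_tmul (z : M ⊗[R] N) :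
    ∃ n₀ n₁ : N, z = b 0 ⊗ₜ n₀ + b 1 ⊗ₜ n₁ := by
  obtain ⟨c, rfl⟩ := TensorProduct.eq_repr_basis_left b z
  exact ⟨c 0, c 1, by rw [Finsupp.sum_fintype _ _ (by simp), Fin.sum_univ_two]⟩

lemma Module.Basis.tmul_add_tmul_eq_zero_iff {n₀ n₁ : N} :
    b 0 ⊗ₜ n₀ + b 1 ⊗ₜ[R] n₁ = 0 ↔ n₀ = 0 ∧ n₁ = 0 := by
  refine ⟨fun h => ?_, by rintro ⟨rfl, rfl⟩; simp⟩
  have hcoord (i : Fin 2) := congrArg (TensorProduct.equivFinsuppOfBasisLeft b · i) h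
  simpa [TensorProduct.equivFinsuppOfBasisLeft_apply_tmul_apply, Finsupp.single_apply]
    using And.intro (hcoord 0) (hcoord 1)

end TwoElementBasis

lemma p1_tmul {A B : Type} [CommRing A] [CommRing B] [Algebra ℝ A] [Algebra ℝ B]
    (εA : A →ₐ[ℝ] ℝ) (a : A) (b : B) : p1 εA (a ⊗ₜ b) = εA a • b := by
  simp [p1, Algebra.smul_def]

lemma p0_tmul {A B : Type} [CommRing A] [CommRing B] [Algebra ℝ A] [Algebra ℝ B]
    (εA : A →ₐ[ℝ] ℝ) (εB : B →ₐ[ℝ] ℝ) (a : A) (b : B) :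
    p0 εA εB (a ⊗ₜ b) = (εA a * εB b) • 1 := by
  simp [p0, Algebra.smul_def]

lemma one_tmul_add_xD_tmul_mem_equalizer_iff (m m' : WD) :
    1 ⊗ₜ m + xD ⊗ₜ m' ∈ AlgHom.equalizer (p1 εD) (p0 εD εD) ↔ m = εD m • 1 := by
  simp [AlgHom.mem_equalizer, p1_tmul, p0_tmul, εD_xD]

lemma exists_eq_one_tmul_add_xD_tmul {M : Type*} [AddCommMonoid M] [Module ℝ M]
    (z : WD ⊗[ℝ] M) : ∃ m m' : M, z = 1 ⊗ₜ m + xD ⊗ₜ m' := by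
  simpa using basisWD.exists_eq_tmul_add_tmul z

lemma one_tmul_add_xD_tmul_eq_zero_iff {M : Type*} [AddCommMonoid M] [Module ℝ M] {m m' : M} :
    (1 : WD) ⊗ₜ m + xD ⊗ₜ[ℝ] m' = 0 ↔ m = 0 ∧ m' = 0 := by
  simpa using basisWD.tmul_add_tmul_eq_zero_iff (n₀ := m) (n₁ := m')

def uD2 : WD2 := Ideal.Quotient.mk ID2 (MvPolynomial.X 0)

def vD2 : WD2 := Ideal.Quotient.mk ID2 (MvPolynomial.X 1)

lemma uD2_mul_uD2 : uD2 * uD2 = 0 :=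
  Ideal.Quotient.eq_zero_iff_mem.2 (Ideal.subset_span (by simp))

lemma uD2_mul_vD2 : uD2 * vD2 = 0 :=
  Ideal.Quotient.eq_zero_iff_mem.2 (Ideal.subset_span (by simp))

lemma vD2_mul_vD2 : vD2 * vD2 = 0 :=
  Ideal.Quotient.eq_zero_iff_mem.2 (Ideal.subset_span (by simp))

lemma exists_eq_smul_one_add_smul_uD2_add_smul_vD2 (w : WD2) :
    ∃ a b c : ℝ, w = a • 1 + b • uD2 + c • vD2 := by
  obtain ⟨p, rfl⟩ : ∃ p, (Ideal.Quotient.mkₐ ℝ ID2 : MvPolynomial (Fin 2) ℝ →ₐ[ℝ] WD2) p = w :=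
    Ideal.Quotient.mkₐ_surjective ℝ _ w
  induction p using MvPolynomial.induction_on with
  | C a => exact ⟨a, 0, 0, by
    simp only [MvPolynomial.algHom_C, Algebra.smul_def, mul_one, map_zero, zero_mul, add_zero]
    rfl⟩
  | add p q hp hq =>
    obtain ⟨a, b, c, hp⟩ := hp
    obtain ⟨a', b', c', hq⟩ := hq
    exact ⟨a + a', b + b', c + c', by rw [map_add, hp, hq, add_smul, add_smul, add_smul]; abel⟩
  | mul_X p i hp =>
    obtain ⟨a, b, c, hp⟩ := hp
    rw [map_mul, hp]
    fin_cases i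
    · exact ⟨0, a, 0, by
        change _ * uD2 = _
        simp [add_mul, uD2_mul_uD2, mul_comm vD2 uD2, uD2_mul_vD2]⟩
    · exact ⟨0, 0, a, by
        change _ * vD2 = _
        simp [add_mul, uD2_mul_vD2, vD2_mul_vD2]⟩

lemma iota_uD2 : iota uD2 = xD ⊗ₜ 1 := by
  change MvPolynomial.aeval _ (MvPolynomial.X 0) = _
  simp

lemma iota_vD2 : iota vD2 = xD ⊗ₜ xD := by
  change MvPolynomial.aeval _ (MvPolynomial.X 1) = _
  simp

lemma iota_smul_one_add_smul_uD2_add_smul_vD2 (a b c : ℝ) :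
    iota (a • 1 + b • uD2 + c • vD2) = 1 ⊗ₜ (a • 1) + xD ⊗ₜ (b • 1 + c • xD) := by
  simp only [map_add, map_smul, map_one, iota_uD2, iota_vD2, TensorProduct.tmul_add,
    TensorProduct.tmul_smul, add_assoc]
  rfl

/-- `W_{D(2)} → W_D ⊗ W_D ⇉ W_D` is an equalizer diagram: `ι` is injective with range
the equalizer subalgebra of `p₁` and `p₀`. -/
theorem iota_injective_and_range_eq_equalizer :
    Function.Injective iota ∧ iota.range = AlgHom.equalizer (p1 εD) (p0 εD εD) := by
  refine ⟨(injective_iff_map_eq_zero _).2 fun w hw => ?_, le_antisymm ?_ fun z hz => ?_⟩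
  · obtain ⟨a, b, c, rfl⟩ := exists_eq_smul_one_add_smul_uD2_add_smul_vD2 w
    rw [iota_smul_one_add_smul_uD2_add_smul_vD2, one_tmul_add_xD_tmul_eq_zero_iff] at hw
    obtain ⟨ha, -⟩ := linearIndependent_one_xD.eq_zero_of_pair' (t := 0) (by simpa using hw.1)
    obtain ⟨hb, hc⟩ := linearIndependent_one_xD.eq_zero_of_pair hw.2
    simp [ha, hb, hc]
  · rintro _ ⟨w, rfl⟩
    change iota w ∈ _
    obtain ⟨a, b, c, rfl⟩ := exists_eq_smul_one_add_smul_uD2_add_smul_vD2 w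
    rw [iota_smul_one_add_smul_uD2_add_smul_vD2, one_tmul_add_xD_tmul_mem_equalizer_iff]
    simp
  · obtain ⟨m, m', rfl⟩ := exists_eq_one_tmul_add_xD_tmul z
    obtain ⟨b, c, rfl⟩ := exists_eq_smul_one_add_smul_xD m'
    rw [one_tmul_add_xD_tmul_mem_equalizer_iff] at hz
    refine (AlgHom.mem_range _).2 ⟨εD m • 1 + b • uD2 + c • vD2, ?_⟩
    rw [iota_smul_one_add_smul_uD2_add_smul_vD2, ← hz]

end
end

section
/- Let (W₁, ε₁), (W₂, ε₂), (W₃, ε₃) be augmented commutative ℝ-algebras. Regard W₁ ⊗̃ W₂ as augmented by the restriction of ε₁ ⊗ ε₂ : W₁ ⊗ W₂ → ℝ, and regard W₂ ⊗ W₃ as augmented by ε₂ ⊗ ε₃. Let j : (W₁ ⊗̃ W₂) ⊗ W₃ → (W₁ ⊗ W₂) ⊗ W₃ be the ℝ-algebra homomorphism induced by the inclusion W₁ ⊗̃ W₂ ↪ W₁ ⊗ W₂ and the identity of W₃, and let α : (W₁ ⊗ W₂) ⊗ W₃ ≅ W₁ ⊗ (W₂ ⊗ W₃) be the associativity isomorphism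 of tensor products. Then α maps the image under j of the subalgebra (W₁ ⊗̃ W₂) ⊗̃ W₃ bijectively onto the subalgebra W₁ ⊗̃ (W₂ ⊗ W₃); that is, (W₁ ⊗̃ W₂) ⊗̃ W₃ = W₁ ⊗̃ (W₂ ⊗ W₃). -/
open TensorProduct Polynomial

noncomputable section

/-- The reduced tensor product `A ⊗̃ B`: the equalizer subalgebra of `p₁` and `p₀`. -/
def redT {A B : Type} [CommRing A] [CommRing B] [Algebra ℝ A] [Algebra ℝ B]
    (εA : A →ₐ[ℝ] ℝ) (εB : B →ₐ[ℝ] ℝ) : Subalgebra ℝ (A ⊗[ℝ] B) :=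
  AlgHom.equalizer (p1 εA) (p0 εA εB)

/-- The tensor product of two augmentations, `a ⊗ b ↦ ε_A a * ε_B b`. -/
def tensAug {A B : Type} [CommRing A] [CommRing B] [Algebra ℝ A] [Algebra ℝ B]
    (εA : A →ₐ[ℝ] ℝ) (εB : B →ₐ[ℝ] ℝ) : (A ⊗[ℝ] B) →ₐ[ℝ] ℝ :=
  Algebra.TensorProduct.productMap εA εB

/-!
Write `x = α y` with `y ∈ (W₁ ⊗ W₂) ⊗ W₃`. Then `x ∈ W₁ ⊗̃ (W₂ ⊗ W₃)` is a single equation in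
`W₂ ⊗ W₃`; applying `ε₂ ⊗ id` to it splits it into the equation defining `(W₁ ⊗ W₂) ⊗̃ W₃` and
the equation `(p₁ ⊗ id) y = (p₀ ⊗ id) y`. Since `W₃` is flat over `ℝ`, `· ⊗ W₃` preserves
equalizers, so the latter says exactly that `y` lies in the image of `(W₁ ⊗̃ W₂) ⊗ W₃`.
-/

open Algebra.TensorProduct (includeRight)

theorem Algebra.TensorProduct.range_map_equalizer_val {R A B C : Type*} [CommRing R]
    [CommRing A] [CommRing B] [CommRing C] [Algebra R A] [Algebra R B] [Algebra R C]
    [Module.Flat R C] (f g : A →ₐ[R] B) :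
    (map (AlgHom.equalizer f g).val (AlgHom.id R C)).range =
      AlgHom.equalizer (map f (AlgHom.id R C)) (map g (AlgHom.id R C)) := by
  have hexact : Function.Exact (AlgHom.equalizer f g).val.toLinearMap
      (f.toLinearMap - g.toLinearMap) := fun y => by
    simp [sub_eq_zero]
  have rTensor_eq (h : A →ₐ[R] B) :
      LinearMap.rTensor C h.toLinearMap = (map h (AlgHom.id R C)).toLinearMap := by
    ext; rfl
  ext y
  constructor
  · rintro ⟨z, rfl⟩
    have hfg : f.comp (AlgHom.equalizer f g).val = g.comp (AlgHom.equalizer f g).val :=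
      AlgHom.ext fun x => x.2
    change map f _ (map _ _ z) = map g _ (map _ _ z)
    rw [← AlgHom.comp_apply, ← AlgHom.comp_apply, ← map_comp, ← map_comp, hfg]
  · intro hy
    obtain ⟨z, rfl⟩ := (Module.Flat.rTensor_exact C hexact y).mp (by
      rw [LinearMap.rTensor_sub, LinearMap.sub_apply, sub_eq_zero, rTensor_eq, rTensor_eq]
      exact hy)
    exact ⟨z, rfl⟩

section

variable {A A' B : Type} [CommRing A] [CommRing A'] [CommRing B] [Algebra ℝ A] [Algebra ℝ A']
  [Algebra ℝ B]

theorem p1_comp_map (εA : A →ₐ[ℝ] ℝ) (f : A' →ₐ[ℝ] A) :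
    (p1 (B := B) εA).comp (Algebra.TensorProduct.map f (AlgHom.id ℝ B)) = p1 (εA.comp f) := by
  ext <;> simp [p1]

theorem p0_comp_map (εA : A →ₐ[ℝ] ℝ) (εB : B →ₐ[ℝ] ℝ) (f : A' →ₐ[ℝ] A) :
    (p0 εA εB).comp (Algebra.TensorProduct.map f (AlgHom.id ℝ B)) = p0 (εA.comp f) εB := by
  ext <;> simp [p0]

theorem redT_comp_eq_comap (εA : A →ₐ[ℝ] ℝ) (εB : B →ₐ[ℝ] ℝ) (f : A' →ₐ[ℝ] A) :
    redT (εA.comp f) εB = (redT εA εB).comap (Algebra.TensorProduct.map f (AlgHom.id ℝ B)) := by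
  ext x
  simp only [redT, Subalgebra.mem_comap, AlgHom.mem_equalizer, ← p1_comp_map, ← p0_comp_map,
    AlgHom.comp_apply]

theorem comp_p1_eq_tensAug (εA : A →ₐ[ℝ] ℝ) (εB : B →ₐ[ℝ] ℝ) :
    εB.comp (p1 εA) = tensAug εA εB := by
  ext <;> simp [p1, tensAug]

theorem p1_comp_includeRight (εA : A →ₐ[ℝ] ℝ) : (p1 εA).comp includeRight = AlgHom.id ℝ B := by
  ext; simp [p1]

theorem range_map_redT_val (C : Type) [CommRing C] [Algebra ℝ C] (εA : A →ₐ[ℝ] ℝ)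
    (εB : B →ₐ[ℝ] ℝ) :
    (Algebra.TensorProduct.map (redT εA εB).val (AlgHom.id ℝ C)).range =
      AlgHom.equalizer (Algebra.TensorProduct.map (p1 εA) (AlgHom.id ℝ C)) (Algebra.TensorProduct.map (p0 εA εB) (AlgHom.id ℝ C)) :=
  Algebra.TensorProduct.range_map_equalizer_val _ _

end

section

variable {W1 W2 W3 : Type} [CommRing W1] [CommRing W2] [CommRing W3]
  [Algebra ℝ W1] [Algebra ℝ W2] [Algebra ℝ W3]
  (ε1 : W1 →ₐ[ℝ] ℝ) (ε2 : W2 →ₐ[ℝ] ℝ) (ε3 : W3 →ₐ[ℝ] ℝ)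

theorem p1_comp_assoc :
    (p1 ε1).comp (Algebra.TensorProduct.assoc ℝ ℝ ℝ W1 W2 W3).toAlgHom =
      Algebra.TensorProduct.map (p1 ε1) (AlgHom.id ℝ W3) := by
  ext <;> simp [p1, Algebra.TensorProduct.one_def]

theorem p0_tensAug_comp_assoc :
    (p0 ε1 (tensAug ε2 ε3)).comp (Algebra.TensorProduct.assoc ℝ ℝ ℝ W1 W2 W3).toAlgHom =
      includeRight.comp (p0 (tensAug ε1 ε2) ε3) := by
  ext <;> simp [p0, tensAug, Algebra.TensorProduct.one_def, Algebra.algebraMap_eq_smul_one]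

theorem includeRight_comp_p1_tensAug :
    includeRight.comp (p1 (B := W3) (tensAug ε1 ε2)) = Algebra.TensorProduct.map (p0 ε1 ε2) (AlgHom.id ℝ W3) := by
  ext <;> simp [p0, p1, tensAug, Algebra.TensorProduct.one_def, Algebra.algebraMap_eq_smul_one]

theorem comap_assoc_redT_tensAug :
    (redT ε1 (tensAug ε2 ε3)).comap (Algebra.TensorProduct.assoc ℝ ℝ ℝ W1 W2 W3).toAlgHom =
      redT (tensAug ε1 ε2) ε3 ⊓
        AlgHom.equalizer (Algebra.TensorProduct.map (p1 ε1) (AlgHom.id ℝ W3)) (Algebra.TensorProduct.map (p0 ε1 ε2) (AlgHom.id ℝ W3)) := by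
  ext y
  have hp1 := DFunLike.congr_fun (p1_comp_assoc ε1) y
  have hp0 := DFunLike.congr_fun (p0_tensAug_comp_assoc ε1 ε2 ε3) y
  have hinc_p1 := DFunLike.congr_fun (includeRight_comp_p1_tensAug ε1 ε2) y
  simp only [AlgHom.comp_apply] at hp1 hp0 hinc_p1
  have hε2 : p1 ε2 (Algebra.TensorProduct.map (p1 ε1) (AlgHom.id ℝ W3) y) = p1 (tensAug ε1 ε2) y := by
    rw [← AlgHom.comp_apply, p1_comp_map, comp_p1_eq_tensAug]
  rw [Subalgebra.mem_comap, Algebra.mem_inf]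
  simp only [redT, AlgHom.mem_equalizer]
  rw [hp1, hp0, ← hinc_p1]
  constructor
  · intro h
    have h1 : p1 (tensAug ε1 ε2) y = p0 (tensAug ε1 ε2) ε3 y := by
      rw [← hε2, h]
      exact DFunLike.congr_fun (p1_comp_includeRight ε2) _
    exact ⟨h1, h.trans (congrArg _ h1.symm)⟩
  · rintro ⟨h1, h2⟩
    rw [h2, h1]

end

/-- Associativity of the reduced tensor product:
`(W₁ ⊗̃ W₂) ⊗̃ W₃ = W₁ ⊗̃ (W₂ ⊗ W₃)`, where the left-hand side is transported into
`W₁ ⊗ (W₂ ⊗ W₃)` along `j` and the associativity isomorphism `α`. -/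
theorem reduced_tensor_assoc (W1 W2 W3 : Type) [CommRing W1] [CommRing W2] [CommRing W3]
    [Algebra ℝ W1] [Algebra ℝ W2] [Algebra ℝ W3]
    (ε1 : W1 →ₐ[ℝ] ℝ) (ε2 : W2 →ₐ[ℝ] ℝ) (ε3 : W3 →ₐ[ℝ] ℝ) :
    Subalgebra.map (Algebra.TensorProduct.assoc ℝ ℝ ℝ W1 W2 W3).toAlgHom
      (Subalgebra.map (Algebra.TensorProduct.map (redT ε1 ε2).val (AlgHom.id ℝ W3))
        (redT ((tensAug ε1 ε2).comp (redT ε1 ε2).val) ε3)) =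
      redT ε1 (tensAug ε2 ε3) := by
  rw [redT_comp_eq_comap, Subalgebra.map_comap_eq, range_map_redT_val,
    ← comap_assoc_redT_tensAug, Subalgebra.map_comap_eq_self_of_surjective
      (Algebra.TensorProduct.assoc ℝ ℝ ℝ W1 W2 W3).surjective]

end
end

section
/- Let (W₁, ε₁), (W₂, ε₂), (W₃, ε₃) be augmented commutative ℝ-algebras, and let j : (W₁ ⊗̃ W₂) ⊗ W₃ → (W₁ ⊗ W₂) ⊗ W₃ be the ℝ-algebra homomorphism induced by the inclusion W₁ ⊗̃ W₂ ↪ W₁ ⊗ W₂ and the identity of W₃. Then j is injective and the image under j of (W₁ ⊗̃ W₂) ⊗ W₃ equals the equalizer subalgebra of p₁ ⊗ id_{W₃} and p₀ ⊗ id_{W₃} : (W₁ ⊗ W₂) ⊗ W₃ → W₂ ⊗ W₃, where p₁, p₀ : W₁ ⊗ W₂ → W₂ are the structure maps defining W₁ ⊗̃ W₂. -/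
open TensorProduct Polynomial

set_option synthInstance.maxHeartbeats 1000000
set_option maxHeartbeats 1000000

noncomputable section

lemma map_id_eq_rTensor {A B C : Type} [CommRing A] [CommRing B] [CommRing C]
    [Algebra ℝ A] [Algebra ℝ B] [Algebra ℝ C] (f : A →ₐ[ℝ] B) :
    (Algebra.TensorProduct.map f (AlgHom.id ℝ C)).toLinearMap
      = LinearMap.rTensor C f.toLinearMap :=
  TensorProduct.ext' (fun _ _ => rfl)

/-- The canonical map `j : (W₁ ⊗̃ W₂) ⊗ W₃ → (W₁ ⊗ W₂) ⊗ W₃` is injective with range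
the equalizer subalgebra of `p₁ ⊗ id_{W₃}` and `p₀ ⊗ id_{W₃}`. -/
theorem reduced_tensor_tensor_eq_equalizer (W1 W2 W3 : Type)
    [CommRing W1] [CommRing W2] [CommRing W3]
    [Algebra ℝ W1] [Algebra ℝ W2] [Algebra ℝ W3]
    (ε1 : W1 →ₐ[ℝ] ℝ) (ε2 : W2 →ₐ[ℝ] ℝ) (ε3 : W3 →ₐ[ℝ] ℝ) :
    Function.Injective
      (Algebra.TensorProduct.map (redT ε1 ε2).val (AlgHom.id ℝ W3)) ∧
    (Algebra.TensorProduct.map (redT ε1 ε2).val (AlgHom.id ℝ W3)).range =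
      AlgHom.equalizer (Algebra.TensorProduct.map (p1 ε1) (AlgHom.id ℝ W3))
        (Algebra.TensorProduct.map (p0 ε1 ε2) (AlgHom.id ℝ W3)) := by
  set ι := (redT ε1 ε2).val
  set d : (W1 ⊗[ℝ] W2) →ₗ[ℝ] W2 := (p1 ε1).toLinearMap - (p0 ε1 ε2).toLinearMap with hd
  have hexact : Function.Exact ι.toLinearMap d := by
    rw [LinearMap.exact_iff]
    ext x
    simp only [LinearMap.mem_ker, hd, LinearMap.sub_apply, AlgHom.toLinearMap_apply,
      sub_eq_zero, LinearMap.mem_range]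
    constructor
    · intro h
      exact ⟨⟨x, h⟩, rfl⟩
    · rintro ⟨⟨y, hy⟩, rfl⟩
      exact hy
  have hT : Function.Exact (LinearMap.rTensor W3 ι.toLinearMap) (LinearMap.rTensor W3 d) :=
    Module.Flat.rTensor_exact W3 hexact
  have hinj : Function.Injective (Algebra.TensorProduct.map ι (AlgHom.id ℝ W3)) := by
    have : Function.Injective (LinearMap.rTensor W3 ι.toLinearMap) :=
      Module.Flat.rTensor_preserves_injective_linearMap _ Subtype.val_injective
    rwa [← map_id_eq_rTensor] at this
  refine ⟨hinj, ?_⟩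
  ext x
  simp only [AlgHom.mem_range, AlgHom.mem_equalizer]
  have hcoe : ⇑(Algebra.TensorProduct.map ι (AlgHom.id ℝ W3))
      = ⇑(LinearMap.rTensor W3 ι.toLinearMap) := by
    rw [← map_id_eq_rTensor]; rfl
  have hxiff : (Algebra.TensorProduct.map (p1 ε1) (AlgHom.id ℝ W3)) x =
      (Algebra.TensorProduct.map (p0 ε1 ε2) (AlgHom.id ℝ W3)) x ↔
      LinearMap.rTensor W3 d x = 0 := by
    rw [hd, LinearMap.rTensor_sub, LinearMap.sub_apply, sub_eq_zero,
      ← map_id_eq_rTensor, ← map_id_eq_rTensor]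
    exact Iff.rfl
  have hk : LinearMap.ker (LinearMap.rTensor W3 d)
      = LinearMap.range (LinearMap.rTensor W3 ι.toLinearMap) := LinearMap.exact_iff.mp hT
  rw [hxiff, ← LinearMap.mem_ker, hk]
  simp only [LinearMap.mem_range, hcoe]

end
end

section
/- Let (W₁, ε₁), (W₂, ε₂), (W₃, ε₃) be augmented commutative ℝ-algebras and let q_a, q_b, q_c : W₁ ⊗ W₂ ⊗ W₃ → W₂ ⊗ W₃ be the ℝ-algebra homomorphisms determined by q_a(w₁ ⊗ w₂ ⊗ w₃) = ε₁(w₁) • (w₂ ⊗ w₃), q_b(w₁ ⊗ w₂ ⊗ w₃) = (ε₁(w₁)·ε₂(w₂)) • (1 ⊗ w₃), and q_c(w₁ ⊗ w₂ ⊗ w₃) = (ε₁(w₁)·ε₂(w₂)·ε₃(w₃)) • (1 ⊗ 1). Then the intersection of the equalizer subalgebra of q_a and q_b with the equalizer subalgebra of q_b and q_c equals the equalizer subalgebra of q_a and q_c. -/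
open TensorProduct Polynomial

noncomputable section

section

variable {W1 W2 W3 : Type} [CommRing W1] [CommRing W2] [CommRing W3]
  [Algebra ℝ W1] [Algebra ℝ W2] [Algebra ℝ W3]

/-- `q_a : W₁ ⊗ W₂ ⊗ W₃ → W₂ ⊗ W₃`, `w₁ ⊗ w₂ ⊗ w₃ ↦ ε₁ w₁ • (w₂ ⊗ w₃)`. -/
def qa (ε1 : W1 →ₐ[ℝ] ℝ) : ((W1 ⊗[ℝ] W2) ⊗[ℝ] W3) →ₐ[ℝ] W2 ⊗[ℝ] W3 :=
  Algebra.TensorProduct.map (p1 ε1) (AlgHom.id ℝ W3)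

/-- `q_b : W₁ ⊗ W₂ ⊗ W₃ → W₂ ⊗ W₃`, `w₁ ⊗ w₂ ⊗ w₃ ↦ (ε₁ w₁ · ε₂ w₂) • (1 ⊗ w₃)`. -/
def qb (ε1 : W1 →ₐ[ℝ] ℝ) (ε2 : W2 →ₐ[ℝ] ℝ) :
    ((W1 ⊗[ℝ] W2) ⊗[ℝ] W3) →ₐ[ℝ] W2 ⊗[ℝ] W3 :=
  Algebra.TensorProduct.map (p0 ε1 ε2) (AlgHom.id ℝ W3)

/-- `q_c : W₁ ⊗ W₂ ⊗ W₃ → W₂ ⊗ W₃`, `w₁ ⊗ w₂ ⊗ w₃ ↦ (ε₁ w₁ · ε₂ w₂ · ε₃ w₃) • (1 ⊗ 1)`. -/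
def qc (ε1 : W1 →ₐ[ℝ] ℝ) (ε2 : W2 →ₐ[ℝ] ℝ) (ε3 : W3 →ₐ[ℝ] ℝ) :
    ((W1 ⊗[ℝ] W2) ⊗[ℝ] W3) →ₐ[ℝ] W2 ⊗[ℝ] W3 :=
  (Algebra.ofId ℝ (W2 ⊗[ℝ] W3)).comp (tensAug (tensAug ε1 ε2) ε3)

/-- `Eq(q_a, q_b) ⊓ Eq(q_b, q_c) = Eq(q_a, q_c)`. -/
theorem equalizer_inf_equalizer_eq_equalizer
    (ε1 : W1 →ₐ[ℝ] ℝ) (ε2 : W2 →ₐ[ℝ] ℝ) (ε3 : W3 →ₐ[ℝ] ℝ) :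
    AlgHom.equalizer (qa (W2 := W2) (W3 := W3) ε1) (qb ε1 ε2) ⊓
        AlgHom.equalizer (qb (W3 := W3) ε1 ε2) (qc ε1 ε2 ε3) =
      AlgHom.equalizer (qa (W2 := W2) (W3 := W3) ε1) (qc ε1 ε2 ε3) := by
  set s : (W2 ⊗[ℝ] W3) →ₐ[ℝ] W2 ⊗[ℝ] W3 :=
    Algebra.TensorProduct.map ((Algebra.ofId ℝ W2).comp ε2) (AlgHom.id ℝ W3) with hs
  have hsa : s.comp (qa (W2 := W2) (W3 := W3) ε1) = qb ε1 ε2 := by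
    ext x
    · simp [hs, qa, qb, p1, p0, Algebra.ofId_apply, Algebra.algebraMap_eq_smul_one,
        TensorProduct.smul_tmul']
    · simp [hs, qa, qb, p1, p0, Algebra.ofId_apply, Algebra.algebraMap_eq_smul_one,
        TensorProduct.smul_tmul']
    · simp [hs, qa, qb, p1, p0]
  have hsc : ∀ x, s (qc ε1 ε2 ε3 x) = qc ε1 ε2 ε3 x := fun x =>
    s.commutes ((tensAug (tensAug ε1 ε2) ε3) x)
  ext x
  simp only [Algebra.mem_inf, AlgHom.mem_equalizer]
  constructor
  · rintro ⟨h1, h2⟩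
    exact h1.trans h2
  · intro h
    have hb : qb ε1 ε2 x = qc ε1 ε2 ε3 x := by
      rw [← hsa]
      simp only [AlgHom.comp_apply, h, hsc]
    exact ⟨h.trans hb.symm, hb⟩

end

end
end

section
/- If W₁ and W₂ are Weil algebras and f, g : W₁ → W₂ are ℝ-algebra homomorphisms, then the equalizer subalgebra {a ∈ W₁ : f(a) = g(a)} is again a Weil algebra: it is finite-dimensional over ℝ, it is a local ring, and its residue field is isomorphic to ℝ as an ℝ-algebra. -/
/-!
A unit of `W₁` lying in the equalizer `E` has its inverse in `E` as well, so the inclusion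
`E → W₁` reflects units and `E` inherits locality from `W₁`. The composite `E → W₁ → k(W₁) ≅ ℝ`
is an `ℝ`-algebra map onto the field `ℝ`, so its kernel is the maximal ideal of `E`.
-/

noncomputable section

open IsLocalRing

namespace AlgHom

variable {R A B : Type*} [CommSemiring R] [Semiring A] [Semiring B] [Algebra R A] [Algebra R B]

theorem mem_equalizer_of_mul_eq_one {f g : A →ₐ[R] B} {a b : A} (ha : a ∈ equalizer f g)
    (hab : a * b = 1) (hba : b * a = 1) : b ∈ equalizer f g := by
  have ha : f a = g a := ha
  show f b = g b
  calc f b = f b * g (a * b) := by rw [hab, map_one, mul_one]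
    _ = f (b * a) * g b := by rw [map_mul, map_mul, ha, mul_assoc]
    _ = g b := by rw [hba, map_one, one_mul]

instance isLocalHom_equalizer_val (f g : A →ₐ[R] B) :
    IsLocalHom ((equalizer f g).val : equalizer f g →+* A) where
  map_nonunit a := by
    rintro ⟨u, hu : ↑u = (a : A)⟩
    have hinv : (↑u⁻¹ : A) ∈ equalizer f g :=
      mem_equalizer_of_mul_eq_one a.2 (hu ▸ u.mul_inv) (hu ▸ u.inv_mul)
    exact ⟨⟨a, ⟨_, hinv⟩, Subtype.ext <| show (a : A) * _ = 1 from hu ▸ u.mul_inv,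
      Subtype.ext <| show _ * (a : A) = 1 from hu ▸ u.inv_mul⟩, rfl⟩

theorem surjective_of_codomain_eq_base (φ : A →ₐ[R] R) : Function.Surjective φ :=
  fun r => ⟨algebraMap R A r, φ.commutes r⟩

end AlgHom

def IsLocalRing.ResidueField.algEquivOfAlgHom {K A : Type*} [Field K] [CommRing A] [IsLocalRing A]
    [Algebra K A] (φ : A →ₐ[K] K) : ResidueField A ≃ₐ[K] K :=
  have hφ := φ.surjective_of_codomain_eq_base
  (Ideal.quotientEquivAlgOfEq K (ker_eq_maximalIdeal (φ : A →+* K) hφ).symm).trans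
    (Ideal.quotientKerAlgEquivOfSurjective hφ)

theorem equalizer_of_weil_is_weil_general (W1 W2 : Type) [CommRing W1] [CommRing W2]
    [Algebra ℝ W1] [Algebra ℝ W2]
    [FiniteDimensional ℝ W1] [IsLocalRing W1]
    (h1 : Nonempty (IsLocalRing.ResidueField W1 ≃ₐ[ℝ] ℝ))
    (f g : W1 →ₐ[ℝ] W2) :
    FiniteDimensional ℝ (AlgHom.equalizer f g) ∧
    ∃ hloc : IsLocalRing (AlgHom.equalizer f g),
      letI := hloc
      Nonempty (IsLocalRing.ResidueField (AlgHom.equalizer f g) ≃ₐ[ℝ] ℝ) := by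
  obtain ⟨e⟩ := h1
  have hloc : IsLocalRing (AlgHom.equalizer f g) :=
    RingHom.domain_isLocalRing ((AlgHom.equalizer f g).val : _ →+* W1)
  let φ : AlgHom.equalizer f g →ₐ[ℝ] ℝ :=
    (e : ResidueField W1 →ₐ[ℝ] ℝ).comp
      ((IsScalarTower.toAlgHom ℝ W1 (ResidueField W1)).comp (AlgHom.equalizer f g).val)
  exact ⟨inferInstance, hloc, ⟨ResidueField.algEquivOfAlgHom φ⟩⟩

/-- The equalizer of two ℝ-algebra homomorphisms of Weil algebras is a Weil algebra:
finite-dimensional over ℝ, local, with residue field ℝ. -/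
theorem equalizer_of_weil_is_weil (W1 W2 : Type) [CommRing W1] [CommRing W2]
    [Algebra ℝ W1] [Algebra ℝ W2]
    [FiniteDimensional ℝ W1] [IsLocalRing W1]
    (h1 : Nonempty (IsLocalRing.ResidueField W1 ≃ₐ[ℝ] ℝ))
    [FiniteDimensional ℝ W2] [IsLocalRing W2]
    (h2 : Nonempty (IsLocalRing.ResidueField W2 ≃ₐ[ℝ] ℝ))
    (f g : W1 →ₐ[ℝ] W2) :
    FiniteDimensional ℝ (AlgHom.equalizer f g) ∧
    ∃ hloc : IsLocalRing (AlgHom.equalizer f g),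
      letI := hloc
      Nonempty (IsLocalRing.ResidueField (AlgHom.equalizer f g) ≃ₐ[ℝ] ℝ) :=
  equalizer_of_weil_is_weil_general W1 W2 h1 f g

end
end

section
/- Let W₁ and W₂ be Weil algebras, each equipped with its (unique) augmentation, i.e., the ℝ-algebra homomorphism to ℝ given by the quotient by the maximal ideal. Then the reduced tensor product W₁ ⊗̃ W₂, i.e., the equalizer subalgebra {x ∈ W₁ ⊗ W₂ : p₁(x) = p₀(x)}, is again a Weil algebra: finite-dimensional over ℝ, local, with residue field isomorphic to ℝ as an ℝ-algebra. -/
open TensorProduct Polynomial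

noncomputable section

/-- The residue map of a local ℝ-algebra, as an ℝ-algebra homomorphism. -/
def residueAlgHom (W : Type) [CommRing W] [Algebra ℝ W] [IsLocalRing W] :
    W →ₐ[ℝ] IsLocalRing.ResidueField W :=
  { toRingHom := IsLocalRing.residue W
    commutes' := fun _ => rfl }

/-- The unique augmentation of a Weil algebra: the quotient map onto the residue field
followed by the identification of the residue field with ℝ. -/
def weilAug {W : Type} [CommRing W] [Algebra ℝ W] [IsLocalRing W]
    (ρ : IsLocalRing.ResidueField W ≃ₐ[ℝ] ℝ) : W →ₐ[ℝ] ℝ :=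
  ρ.toAlgHom.comp (residueAlgHom W)



section MyAux
open IsLocalRing

variable {A : Type} [CommRing A] [Algebra ℝ A]

lemma aux_isUnit (ε : A →ₐ[ℝ] ℝ)
    (hnil : ∀ x : A, ε x = 0 → IsNilpotent x) {a : A} (h : ε a ≠ 0) : IsUnit a := by
  have h1 : IsUnit (algebraMap ℝ A (ε a)) := (IsUnit.mk0 _ h).map (algebraMap ℝ A)
  have h2 : IsNilpotent (a - algebraMap ℝ A (ε a)) := hnil _ (by simp)
  have := IsNilpotent.isUnit_add_left_of_commute h2 h1 (Commute.all _ _)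
  simpa using this

lemma weil_of_aug (ε : A →ₐ[ℝ] ℝ)
    (hnil : ∀ x : A, ε x = 0 → IsNilpotent x) :
    ∃ h : IsLocalRing A, letI := h;
      Nonempty (IsLocalRing.ResidueField A ≃ₐ[ℝ] ℝ) := by
  have hnt : Nontrivial A := ⟨1, 0, fun h => by
    have := ε.map_one; rw [h, map_zero] at this; exact one_ne_zero this.symm⟩
  have hloc : IsLocalRing A := IsLocalRing.of_isUnit_or_isUnit_one_sub_self fun a => by
    by_cases h : ε a = 0
    · exact Or.inr (aux_isUnit ε hnil (by simp [h]))
    · exact Or.inl (aux_isUnit ε hnil h)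
  refine ⟨hloc, ?_⟩
  have hker : IsLocalRing.maximalIdeal A = RingHom.ker ε := by
    ext x
    simp only [IsLocalRing.mem_maximalIdeal, mem_nonunits_iff, RingHom.mem_ker]
    constructor
    · intro hx; by_contra h
      exact hx (aux_isUnit ε hnil h)
    · intro hx h
      exact (hnil x hx).not_isUnit h
  have hsurj : Function.Surjective ε := fun r => ⟨algebraMap ℝ A r, by simp⟩
  let e : (A ⧸ maximalIdeal A) ≃ₐ[ℝ] ℝ :=
    (Ideal.quotientEquivAlgOfEq ℝ hker).trans (Ideal.quotientKerAlgEquivOfSurjective hsurj)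
  refine ⟨AlgEquiv.ofRingEquiv (f := e.toRingEquiv) fun r => ?_⟩
  show e (algebraMap ℝ (ResidueField A) r) = r
  have h1 : algebraMap ℝ (ResidueField A) r
      = Ideal.Quotient.mk (maximalIdeal A) (algebraMap ℝ A r) := rfl
  rw [h1]
  simp [e, Ideal.quotientEquivAlgOfEq_mk, Ideal.quotientKerAlgEquivOfSurjective,
    Ideal.quotientKerAlgEquivOfRightInverse_apply]




lemma ker_weilAug {W : Type} [CommRing W] [Algebra ℝ W] [IsLocalRing W]
    (ρ : IsLocalRing.ResidueField W ≃ₐ[ℝ] ℝ) :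
    RingHom.ker (weilAug ρ) = maximalIdeal W := by
  ext x
  rw [RingHom.mem_ker, ← IsLocalRing.ker_residue (R := W), RingHom.mem_ker]
  show ρ (residue W x) = 0 ↔ _
  rw [map_eq_zero_iff ρ ρ.injective]

lemma maxIdeal_nilpotent (W : Type) [CommRing W] [Algebra ℝ W] [FiniteDimensional ℝ W]
    [IsLocalRing W] : IsNilpotent (maximalIdeal W) := by
  haveI : IsArtinianRing W := isArtinian_of_tower ℝ inferInstance
  rw [← IsLocalRing.jacobson_eq_maximalIdeal (⊥ : Ideal W) bot_ne_top]
  exact IsArtinianRing.isNilpotent_jacobson_bot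

lemma tensor_ker_nilpotent (W1 W2 : Type) [CommRing W1] [CommRing W2]
    [Algebra ℝ W1] [Algebra ℝ W2]
    [FiniteDimensional ℝ W1] [IsLocalRing W1]
    (ρ1 : IsLocalRing.ResidueField W1 ≃ₐ[ℝ] ℝ)
    [FiniteDimensional ℝ W2] [IsLocalRing W2]
    (ρ2 : IsLocalRing.ResidueField W2 ≃ₐ[ℝ] ℝ)
    (x : W1 ⊗[ℝ] W2)
    (hx : Algebra.TensorProduct.productMap (weilAug ρ1) (weilAug ρ2) x = 0) :
    IsNilpotent x := by
  set ε := Algebra.TensorProduct.productMap (weilAug ρ1) (weilAug ρ2) with hε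
  set f : W1 →ₐ[ℝ] W1 ⊗[ℝ] W2 := Algebra.TensorProduct.includeLeft
  set g : W2 →ₐ[ℝ] W1 ⊗[ℝ] W2 := Algebra.TensorProduct.includeRight
  set I1 : Ideal (W1 ⊗[ℝ] W2) := (maximalIdeal W1).map f
  set I2 : Ideal (W1 ⊗[ℝ] W2) := (maximalIdeal W2).map g
  have key : ∀ y : W1 ⊗[ℝ] W2, y - algebraMap ℝ (W1 ⊗[ℝ] W2) (ε y) ∈ I1 ⊔ I2 := by
    intro y
    induction y using TensorProduct.induction_on with
    | zero => simp
    | tmul a b =>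
      have hab : ε (a ⊗ₜ[ℝ] b) = weilAug ρ1 a * weilAug ρ2 b := by
        simp [hε]
      set c := weilAug ρ1 a
      set d := weilAug ρ2 b
      have ha' : a - algebraMap ℝ W1 c ∈ maximalIdeal W1 := by
        rw [← ker_weilAug ρ1, RingHom.mem_ker]; simp [c]
      have hb' : b - algebraMap ℝ W2 d ∈ maximalIdeal W2 := by
        rw [← ker_weilAug ρ2, RingHom.mem_ker]; simp [d]
      have hdecomp : a ⊗ₜ[ℝ] b - algebraMap ℝ (W1 ⊗[ℝ] W2) (ε (a ⊗ₜ[ℝ] b))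
          = (a - algebraMap ℝ W1 c) ⊗ₜ[ℝ] b
            + (algebraMap ℝ W1 c ⊗ₜ[ℝ] 1) * (1 ⊗ₜ[ℝ] (b - algebraMap ℝ W2 d)) := by
        rw [hab]
        have h2 : algebraMap ℝ (W1 ⊗[ℝ] W2) (c * d)
            = algebraMap ℝ W1 c ⊗ₜ[ℝ] algebraMap ℝ W2 d := by
          rw [show algebraMap ℝ W2 d = d • (1:W2) from Algebra.algebraMap_eq_smul_one d,
            TensorProduct.tmul_smul, Algebra.TensorProduct.algebraMap_apply, map_mul, mul_comm,
            ← Algebra.smul_def, TensorProduct.smul_tmul']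
        rw [h2, Algebra.TensorProduct.tmul_mul_tmul, mul_one, one_mul,
          TensorProduct.sub_tmul, TensorProduct.tmul_sub]
        abel
      rw [hdecomp]
      refine Ideal.add_mem _ (Ideal.mem_sup_left ?_) (Ideal.mem_sup_right ?_)
      · have h3 : f (a - algebraMap ℝ W1 c) * (1 ⊗ₜ[ℝ] b)
            = (a - algebraMap ℝ W1 c) ⊗ₜ[ℝ] b := by
          rw [show f (a - algebraMap ℝ W1 c) = (a - algebraMap ℝ W1 c) ⊗ₜ[ℝ] 1 from rfl,
            Algebra.TensorProduct.tmul_mul_tmul, mul_one, one_mul]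
        rw [← h3]
        exact Ideal.mul_mem_right _ _ (Ideal.mem_map_of_mem f ha')
      · exact Ideal.mul_mem_left _ _ (Ideal.mem_map_of_mem g hb')
    | add u v hu hv =>
      have h4 : u + v - algebraMap ℝ (W1 ⊗[ℝ] W2) (ε (u + v))
          = (u - algebraMap ℝ (W1 ⊗[ℝ] W2) (ε u)) + (v - algebraMap ℝ (W1 ⊗[ℝ] W2) (ε v)) := by
        rw [map_add ε, RingHom.map_add]; ring
      rw [h4]
      exact Ideal.add_mem _ hu hv
  have hxJ : x ∈ I1 ⊔ I2 := by
    have h5 := key x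
    rwa [hx, map_zero, sub_zero] at h5
  obtain ⟨y, hy, z, hz, rfl⟩ := Submodule.mem_sup.mp hxJ
  obtain ⟨n, hn⟩ := maxIdeal_nilpotent W1
  obtain ⟨m, hm⟩ := maxIdeal_nilpotent W2
  have hynil : IsNilpotent y := by
    refine ⟨n, ?_⟩
    have h6 : y ^ n ∈ I1 ^ n := Ideal.pow_mem_pow hy n
    rwa [← Ideal.map_pow, hn, Submodule.zero_eq_bot, Ideal.map_bot, Ideal.mem_bot] at h6
  have hznil : IsNilpotent z := by
    refine ⟨m, ?_⟩
    have h7 : z ^ m ∈ I2 ^ m := Ideal.pow_mem_pow hz m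
    rwa [← Ideal.map_pow, hm, Submodule.zero_eq_bot, Ideal.map_bot, Ideal.mem_bot] at h7
  exact (Commute.all y z).isNilpotent_add hynil hznil


end MyAux

/-- The reduced tensor product of two Weil algebras, each equipped with its unique
augmentation (quotient by the maximal ideal), is a Weil algebra: finite-dimensional
over ℝ, local, with residue field ℝ. -/
theorem reduced_tensor_of_weil_is_weil (W1 W2 : Type) [CommRing W1] [CommRing W2]
    [Algebra ℝ W1] [Algebra ℝ W2]
    [FiniteDimensional ℝ W1] [IsLocalRing W1]
    (ρ1 : IsLocalRing.ResidueField W1 ≃ₐ[ℝ] ℝ)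
    [FiniteDimensional ℝ W2] [IsLocalRing W2]
    (ρ2 : IsLocalRing.ResidueField W2 ≃ₐ[ℝ] ℝ) :
    FiniteDimensional ℝ (redT (weilAug ρ1) (weilAug ρ2)) ∧
    ∃ hloc : IsLocalRing (redT (weilAug ρ1) (weilAug ρ2)),
      letI := hloc
      Nonempty (IsLocalRing.ResidueField (redT (weilAug ρ1) (weilAug ρ2)) ≃ₐ[ℝ] ℝ) := by
  constructor
  · infer_instance
  · refine weil_of_aug
      ((Algebra.TensorProduct.productMap (weilAug ρ1) (weilAug ρ2)).comp
        (redT (weilAug ρ1) (weilAug ρ2)).val) fun x hx => ?_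
    have hxval : Algebra.TensorProduct.productMap (weilAug ρ1) (weilAug ρ2) x.1 = 0 := hx
    obtain ⟨n, hn⟩ := tensor_ker_nilpotent W1 W2 ρ1 ρ2 x.1 hxval
    exact ⟨n, Subtype.ext (by rw [SubmonoidClass.coe_pow, ZeroMemClass.coe_zero]; exact hn)⟩


end
end
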